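/- arXiv:2310.06455 — 3 statements merged into one kernel-verified Lean document; each statement's English description precedes it below -/
import Mathlib

section
/- Let X and Y be Banach spaces with X reflexive, and let f : D(f) ⊆ X → Y be a bounded continuous (single-valued) mapping whose graph is weakly closed (closed in the product of the weak topologies of X and Y), and such that for each bounded subset M ⊆ R(f) of Y the preimage f⁻¹(M) is a bounded subset of X. Then f is a weakly closed mapping, i.e. the image under f of every bounded weakly closed subset of D(f) is weakly closed in Y. -/
/-!
Bounded weakly closed subsets of a reflexive space are weakly compact (Banach–Alaoglu in the
bidual, which reflexivity identifies with the space). The part of the weakly closed graph lying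
over such a set `S` is therefore a closed set with compact first projection, and its second
projection, which is the weak image of `f '' S`, is closed by the tube lemma.
-/

open Metric Set NormedSpace Topology

/-- A real normed space is reflexive if the canonical embedding into its double dual is
surjective. -/
def IsReflexiveSpace (X : Type*) [NormedAddCommGroup X] [NormedSpace ℝ X] : Prop :=
  Function.Surjective (inclusionInDoubleDual ℝ X)

/-- A subset of a normed space is weakly closed if its image in the weak space is closed. -/
def IsWeaklyClosed {Y : Type*} [NormedAddCommGroup Y] [NormedSpace ℝ Y] (S : Set Y) : Prop :=
  IsClosed ((toWeakSpace ℝ Y) '' S)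

theorem IsClosed.isClosed_image_snd_of_subset_prod {A B : Type*} [TopologicalSpace A]
    [TopologicalSpace B] {K : Set A} (hK : IsCompact K) {C : Set (A × B)} (hC : IsClosed C)
    (hCK : C ⊆ K ×ˢ univ) : IsClosed (Prod.snd '' C) := by
  have : CompactSpace K := isCompact_iff_compactSpace.mp hK
  let ι : K × B → A × B := Prod.map Subtype.val id
  have hC' : ι '' (ι ⁻¹' C) = C :=
    image_preimage_eq_of_subset (by simpa [ι, range_prodMap] using hCK)
  rw [← hC', image_image]
  exact isClosedMap_snd_of_compactSpace _ (hC.preimage (by fun_prop))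

theorem IsReflexiveSpace.range_inclusionInDoubleDualWeak {X : Type*} [NormedAddCommGroup X]
    [NormedSpace ℝ X] (hX : IsReflexiveSpace X) :
    range (inclusionInDoubleDualWeak ℝ X) = univ := by
  refine eq_univ_of_forall fun φ => ?_
  obtain ⟨x, hx⟩ := hX (WeakDual.toStrongDual φ)
  exact ⟨toWeakSpace ℝ X x, hx⟩

theorem IsReflexiveSpace.isCompact_toWeakSpace_image {X : Type*} [NormedAddCommGroup X]
    [NormedSpace ℝ X] (hX : IsReflexiveSpace X) {S : Set X} (hb : Bornology.IsBounded S)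
    (hS : IsWeaklyClosed S) : IsCompact (toWeakSpace ℝ X '' S) := by
  have := isCompact_closure_of_isBounded ℝ X (toWeakSpace ℝ X '' S)
    (by rwa [(toWeakSpace ℝ X).injective.preimage_image])
    (by simp [hX.range_inclusionInDoubleDualWeak])
  rwa [hS.closure_eq] at this

theorem image_image_eq_image_snd_graph_inter_prod {α β A B : Type*} (f : α → β) {D S : Set α}
    (hS : S ⊆ D) {e : α → A} (he : Function.Injective e) (g : β → B) :
    g '' (f '' S) = Prod.snd '' ((fun p : α × β => (e p.1, g p.2)) ''
      {p : α × β | p.1 ∈ D ∧ p.2 = f p.1} ∩ (e '' S) ×ˢ univ) := by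
  ext b
  simp only [mem_image, mem_inter_iff, mem_prod, mem_univ, and_true]
  constructor
  · rintro ⟨_, ⟨x, hx, rfl⟩, rfl⟩
    exact ⟨_, ⟨⟨(x, f x), ⟨hS hx, rfl⟩, rfl⟩, x, hx, rfl⟩, rfl⟩
  · rintro ⟨_, ⟨⟨⟨x, y⟩, ⟨-, hy : y = f x⟩, rfl⟩, x', hx', hxx'⟩, rfl⟩
    exact ⟨y, ⟨x, (he hxx' : x' = x) ▸ hx', hy.symm⟩, rfl⟩

theorem weaklyClosed_mapping_of_weaklyClosed_graph_general
    {X Y : Type*} [NormedAddCommGroup X] [NormedSpace ℝ X]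
    [NormedAddCommGroup Y] [NormedSpace ℝ Y]
    (hXrefl : IsReflexiveSpace X)
    (f : X → Y) (Df : Set X)
    -- the graph of `f` is closed in the product of the weak topologies
    (hgraph : IsClosed ((fun p : X × Y => ((toWeakSpace ℝ X) p.1, (toWeakSpace ℝ Y) p.2)) ''
      {p : X × Y | p.1 ∈ Df ∧ p.2 = f p.1})) :
    ∀ S ⊆ Df, Bornology.IsBounded S → IsWeaklyClosed S → IsWeaklyClosed (f '' S) := by
  intro S hSD hSbdd hScl
  rw [IsWeaklyClosed, image_image_eq_image_snd_graph_inter_prod f hSD (toWeakSpace ℝ X).injective]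
  exact (hgraph.inter (hScl.prod isClosed_univ)).isClosed_image_snd_of_subset_prod
    (hXrefl.isCompact_toWeakSpace_image hSbdd hScl) inter_subset_right

/-- **Lemma 3.**  Let `X` be reflexive and `f : D(f) ⊆ X → Y` a bounded continuous mapping
whose graph is closed in the product of the weak topologies, such that preimages of bounded
subsets of the range are bounded.  Then `f` is weakly closed: the image of every bounded
weakly closed subset of `D(f)` is weakly closed. -/
theorem weaklyClosed_mapping_of_weaklyClosed_graph
    {X Y : Type*} [NormedAddCommGroup X] [NormedSpace ℝ X] [CompleteSpace X]
    [NormedAddCommGroup Y] [NormedSpace ℝ Y] [CompleteSpace Y]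
    (hXrefl : IsReflexiveSpace X)
    (f : X → Y) (Df : Set X)
    (hcont : ContinuousOn f Df)
    (hbdd : ∀ S ⊆ Df, Bornology.IsBounded S → Bornology.IsBounded (f '' S))
    -- the graph of `f` is closed in the product of the weak topologies
    (hgraph : IsClosed ((fun p : X × Y => ((toWeakSpace ℝ X) p.1, (toWeakSpace ℝ Y) p.2)) ''
      {p : X × Y | p.1 ∈ Df ∧ p.2 = f p.1}))
    -- preimages of bounded subsets of the range are bounded
    (hpre : ∀ M ⊆ f '' Df, Bornology.IsBounded M →
      Bornology.IsBounded {x ∈ Df | f x ∈ M}) :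
    ∀ S ⊆ Df, Bornology.IsBounded S → IsWeaklyClosed S → IsWeaklyClosed (f '' S) :=
  weaklyClosed_mapping_of_weaklyClosed_graph_general hXrefl f Df hgraph
end

section
/- Let X and Y be reflexive Banach spaces and let f : D(f) ⊆ X → Y be a bounded continuous single-valued mapping. Assume that for x₀ ∈ D(f) there exists a continuous mapping f₀ : D(f) ⊆ X → Y satisfying, on a neighborhood U_{ε₀}(x₀) ⊂ D(f): (iv) f₀(U_{ε₀}(x₀)) is a bodily subset of Y, f₀(x₀) = f(x₀), and f₀(V(x₀)) = B_r^Y(f₀(x₀)) for some neighborhood V(x₀) ⊆ U_{ε₀}(x₀), and the inverse multivalued mapping f₀⁻¹ : B_r^Y(f₀(x₀)) → X is lower or upper semicontinuous; (v) there is a nondecreasing continuous function k : ℝ₊ → ℝ₊ with k(0) = 0 such that ‖f(x₁) − f(x₂) − f₀(x₁) + f₀(x₂)‖_Y ≤ k(‖f₀(x₁) − f₀(x₂)‖_Y) for all x₁, x₂ ∈ V(x₀), and the m₀-fold iterate satisfies k^{m₀}(τ) ≤ στ for some m₀ ≥ 1 and 0 < σ < 1. Then there is a number δ = δ(k(ε₀))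 ∈ (0, 1) such that for every r₁ ∈ (0, r(1 − δ)) the closed ball B_{r₁}^Y(f(x₀)) is contained in the image f(V(x₀)). -/
open Metric Set NormedSpace Topology

/-- A subset of a topological space is *bodily* if it is connected and has nonempty interior. -/
def IsBodily {Y : Type*} [TopologicalSpace Y] (M : Set Y) : Prop :=
  IsConnected M ∧ (interior M).Nonempty

/-- Lower semicontinuity of a multivalued map on a set. -/
def MVLowerSemicontinuousOn {X Y : Type*} [TopologicalSpace X] [TopologicalSpace Y]
    (F : X → Set Y) (D : Set X) : Prop :=
  ∀ x ∈ D, ∀ V : Set Y, IsOpen V → (F x ∩ V).Nonempty →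
    ∃ U ∈ nhds x, ∀ x' ∈ U ∩ D, (F x' ∩ V).Nonempty

/-- Upper semicontinuity of a multivalued map on a set. -/
def MVUpperSemicontinuousOn {X Y : Type*} [TopologicalSpace X] [TopologicalSpace Y]
    (F : X → Set Y) (D : Set X) : Prop :=
  ∀ x ∈ D, ∀ V : Set Y, IsOpen V → F x ⊆ V →
    ∃ U ∈ nhds x, ∀ x' ∈ U ∩ D, F x' ⊆ V

/-! Let `s` be a right inverse of `f₀` from the ball `A = B_r(f₀ x₀)` into `V`. A point `z ∈ A`
with `f (s z) = y` is a fixed point of `T z = y - f (s z) + z`, and condition (v) says exactly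
that `dist (T a) (T b) ≤ k (dist a b)` on `A`. Since `k t < t` for `t > 0`, `T` maps `A` into
itself as soon as `r₁ + k r ≤ r`, and since `k^[m₀] ≤ σ • id`, the iterate `T^[m₀]` is a
`σ`-contraction of the complete set `A`; its fixed point is then also fixed by `T`. -/

open Function

section IterateModulus

variable {k : ℝ → ℝ}

theorem lt_self_of_iterate_le_mul (hk : Monotone k) {m : ℕ} {σ : ℝ} (hσ1 : σ < 1)
    (hiter : ∀ τ ≥ (0 : ℝ), k^[m] τ ≤ σ * τ) {t : ℝ} (ht : 0 < t) : k t < t := by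
  by_contra! hle
  have hgrow : t ≤ k^[m] t := hk.monotone_iterate_of_le_map hle (Nat.zero_le m)
  nlinarith [hiter t ht.le]

variable {α : Type*} {T : α → α}

theorem dist_iterate_le_iterate [PseudoMetricSpace α] (hk : Monotone k)
    (hT : ∀ a b, dist (T a) (T b) ≤ k (dist a b)) (n : ℕ) (a b : α) :
    dist (T^[n] a) (T^[n] b) ≤ k^[n] (dist a b) := by
  induction n with
  | zero => simp
  | succ n ih =>
    rw [iterate_succ_apply', iterate_succ_apply', iterate_succ_apply']
    exact (hT _ _).trans (hk ih)

theorem exists_isFixedPt_of_iterate_modulus [MetricSpace α] [CompleteSpace α] [Nonempty α]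
    (hk : Monotone k) (hT : ∀ a b, dist (T a) (T b) ≤ k (dist a b)) {m : ℕ} {σ : ℝ}
    (hσ0 : 0 ≤ σ) (hσ1 : σ < 1) (hiter : ∀ τ ≥ (0 : ℝ), k^[m] τ ≤ σ * τ) :
    ∃ z, IsFixedPt T z := by
  have hcontr : ContractingWith ⟨σ, hσ0⟩ T^[m] :=
    ⟨hσ1, LipschitzWith.of_dist_le_mul fun a b =>
      (dist_iterate_le_iterate hk hT m a b).trans (hiter _ dist_nonneg)⟩
  exact ⟨_, hcontr.isFixedPt_fixedPoint_iterate⟩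

theorem exists_mem_isFixedPt_of_iterate_modulus [MetricSpace α] [CompleteSpace α] {A : Set α}
    (hA : IsClosed A) (hne : A.Nonempty) (hTA : MapsTo T A A)
    (hk : Monotone k) (hT : ∀ a ∈ A, ∀ b ∈ A, dist (T a) (T b) ≤ k (dist a b)) {m : ℕ} {σ : ℝ}
    (hσ0 : 0 ≤ σ) (hσ1 : σ < 1) (hiter : ∀ τ ≥ (0 : ℝ), k^[m] τ ≤ σ * τ) :
    ∃ z ∈ A, IsFixedPt T z := by
  have := hA.completeSpace_coe
  have := hne.to_subtype
  obtain ⟨z, hz⟩ := exists_isFixedPt_of_iterate_modulus (T := hTA.restrict T A A) hk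
    (fun a b => hT a a.2 b b.2) hσ0 hσ1 hiter
  exact ⟨z, z.2, congrArg Subtype.val hz⟩

end IterateModulus

theorem closedBall_subset_image_of_comparison {X Y : Type*} [NormedAddCommGroup Y]
    [CompleteSpace Y] {f f₀ : X → Y} {V : Set X} {x₀ : X} (hx₀ : x₀ ∈ V) {r r₁ : ℝ}
    (hr : 0 ≤ r) (hf₀V : closedBall (f₀ x₀) r ⊆ f₀ '' V) {k : ℝ → ℝ} (hk : Monotone k)
    (hcompare : ∀ x₁ ∈ V, ∀ x₂ ∈ V, ‖f x₁ - f x₂ - f₀ x₁ + f₀ x₂‖ ≤ k ‖f₀ x₁ - f₀ x₂‖)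
    {m : ℕ} {σ : ℝ} (hσ0 : 0 ≤ σ) (hσ1 : σ < 1) (hiter : ∀ τ ≥ (0 : ℝ), k^[m] τ ≤ σ * τ)
    (hr₁ : r₁ + k r ≤ r) :
    closedBall (f x₀) r₁ ⊆ f '' V := by
  intro y hy
  have hsection : ∀ z ∈ closedBall (f₀ x₀) r, ∃ x ∈ V, f₀ x = z := fun z hz => hf₀V hz
  have : Nonempty X := ⟨x₀⟩
  choose! s hsV hfs using hsection
  have hT : ∀ a ∈ closedBall (f₀ x₀) r, ∀ b ∈ closedBall (f₀ x₀) r,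
      dist (y - f (s a) + a) (y - f (s b) + b) ≤ k (dist a b) := by
    intro a ha b hb
    have h := hcompare _ (hsV a ha) _ (hsV b hb)
    rw [hfs a ha, hfs b hb] at h
    have hdiff : y - f (s a) + a - (y - f (s b) + b) = -(f (s a) - f (s b) - a + b) := by abel
    rwa [dist_eq_norm, dist_eq_norm, hdiff, norm_neg]
  have hTA : MapsTo (fun z => y - f (s z) + z) (closedBall (f₀ x₀) r)
      (closedBall (f₀ x₀) r) := by
    intro z hz
    have hcmp := hcompare _ (hsV z hz) _ hx₀
    rw [hfs z hz] at hcmp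
    rw [mem_closedBall_iff_norm] at hy hz ⊢
    calc ‖y - f (s z) + z - f₀ x₀‖
        = ‖(y - f x₀) - (f (s z) - f x₀ - z + f₀ x₀)‖ := by congr 1; abel
      _ ≤ r₁ + k r := (norm_sub_le _ _).trans (add_le_add hy (hcmp.trans (hk hz)))
      _ ≤ r := hr₁
  obtain ⟨z, hz, hfix⟩ := exists_mem_isFixedPt_of_iterate_modulus isClosed_closedBall
    (nonempty_closedBall.2 hr) hTA hk hT hσ0 hσ1 hiter
  refine ⟨s z, hsV z hz, ?_⟩
  have hfix : y - f (s z) + z = z := hfix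
  rwa [add_eq_right, sub_eq_zero, eq_comm] at hfix

theorem local_comparison_ball_in_image_general
    {X Y : Type*} [NormedAddCommGroup X]
    [NormedAddCommGroup Y] [CompleteSpace Y]
    (f : X → Y)
    (x₀ : X)
    (f₀ : X → Y)
    -- (iv)
    (V : Set X) (hVnhd : V ∈ nhds x₀)
    (r : ℝ) (hr : 0 < r) (hf₀V : f₀ '' V = closedBall (f₀ x₀) r)
    -- (v)
    (k : ℝ → ℝ) (hkmono : Monotone k)
    (hcompare : ∀ x₁ ∈ V, ∀ x₂ ∈ V,
      ‖f x₁ - f x₂ - f₀ x₁ + f₀ x₂‖ ≤ k ‖f₀ x₁ - f₀ x₂‖)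
    (m₀ : ℕ) (σ : ℝ) (hσ : σ ∈ Set.Ioo (0 : ℝ) 1)
    (hiter : ∀ τ ≥ (0 : ℝ), k^[m₀] τ ≤ σ * τ) :
    ∃ δ ∈ Set.Ioo (0 : ℝ) 1, ∀ r₁ ∈ Set.Ioo 0 (r * (1 - δ)),
      closedBall (f x₀) r₁ ⊆ f '' V := by
  have hkr : k r / r < 1 :=
    (div_lt_one hr).2 (lt_self_of_iterate_le_mul hkmono hσ.2 hiter hr)
  obtain ⟨δ, hδlo, hδ1⟩ := exists_between (max_lt zero_lt_one hkr)
  have hkrδ : k r ≤ δ * r := (div_le_iff₀ hr).1 ((le_max_right _ _).trans hδlo.le)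
  refine ⟨δ, ⟨(le_max_left _ _).trans_lt hδlo, hδ1⟩, fun r₁ hr₁ => ?_⟩
  exact closedBall_subset_image_of_comparison (mem_of_mem_nhds hVnhd) hr.le hf₀V.symm.subset
    hkmono hcompare hσ.1.le hσ.2 hiter (by nlinarith [hr₁.2])

/-- **Theorem 4 (local comparison).**  If a bounded continuous mapping `f` is locally comparable
near `x₀` with a continuous mapping `f₀` whose image of a neighborhood `V(x₀)` is a closed ball
`B_r(f₀(x₀))` and whose inverse is lower or upper semicontinuous, and condition (v) holds with a
contracting modulus `k`, then a ball `B_{r₁}(f(x₀))` is contained in `f(V(x₀))` for every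
`r₁ ∈ (0, r(1 − δ))`. -/
theorem local_comparison_ball_in_image
    {X Y : Type*} [NormedAddCommGroup X] [NormedSpace ℝ X] [CompleteSpace X]
    [NormedAddCommGroup Y] [NormedSpace ℝ Y] [CompleteSpace Y]
    (hXrefl : IsReflexiveSpace X) (hYrefl : IsReflexiveSpace Y)
    (f : X → Y) (Df : Set X)
    (hcont : ContinuousOn f Df)
    (hbdd : ∀ S ⊆ Df, Bornology.IsBounded S → Bornology.IsBounded (f '' S))
    (x₀ : X) (hx₀ : x₀ ∈ Df)
    (f₀ : X → Y) (hf₀cont : ContinuousOn f₀ Df)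
    (ε₀ : ℝ) (hε₀ : 0 < ε₀) (hUD : ball x₀ ε₀ ⊆ Df)
    -- (iv)
    (hbodily : IsBodily (f₀ '' ball x₀ ε₀))
    (hf₀x₀ : f₀ x₀ = f x₀)
    (V : Set X) (hVU : V ⊆ ball x₀ ε₀) (hVnhd : V ∈ nhds x₀)
    (r : ℝ) (hr : 0 < r) (hf₀V : f₀ '' V = closedBall (f₀ x₀) r)
    (hinv : MVLowerSemicontinuousOn (fun y => {x ∈ V | f₀ x = y}) (closedBall (f₀ x₀) r) ∨
            MVUpperSemicontinuousOn (fun y => {x ∈ V | f₀ x = y}) (closedBall (f₀ x₀) r))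
    -- (v)
    (k : ℝ → ℝ) (hkc : Continuous k) (hkmono : Monotone k)
    (hknonneg : ∀ t, 0 ≤ k t) (hk0 : k 0 = 0)
    (hcompare : ∀ x₁ ∈ V, ∀ x₂ ∈ V,
      ‖f x₁ - f x₂ - f₀ x₁ + f₀ x₂‖ ≤ k ‖f₀ x₁ - f₀ x₂‖)
    (m₀ : ℕ) (hm₀ : 1 ≤ m₀) (σ : ℝ) (hσ : σ ∈ Set.Ioo (0 : ℝ) 1)
    (hiter : ∀ τ ≥ (0 : ℝ), k^[m₀] τ ≤ σ * τ) :
    ∃ δ ∈ Set.Ioo (0 : ℝ) 1, ∀ r₁ ∈ Set.Ioo 0 (r * (1 - δ)),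
      closedBall (f x₀) r₁ ⊆ f '' V :=
  local_comparison_ball_in_image_general f x₀ f₀ V hVnhd r hr hf₀V k hkmono hcompare m₀ σ hσ hiter
end

section
/- Let ρ, σ ≥ 1 with σ ≥ ρ, let c₀ ≥ 0 and c₁ > 0, and define φ : [0, ∞) → [0, ∞) by φ(τ) = c₀ τ^ρ (τ^σ + c₁)^{−1}. Then φ is continuous and bounded on [0, ∞), and there exists a number μ ≥ 0 such that |φ(t) − φ(s)| · t ≤ (μ + φ(t)) · |t − s| for all t, s ≥ 0 (i.e. φ satisfies the structural condition 11 of the modified Navier–Stokes problem). -/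
/-!
A function `f` on `[0, ∞)` that is bounded by `B` and satisfies `x |f'(x)| ≤ K` obeys
`|f t - f s| t ≤ (2K + 4B) |t - s|`: if `s ≥ t / 2` the mean value theorem on `[t / 2, ∞)`
gives `|f t - f s| ≤ (2K / t) |t - s|`, and otherwise `t ≤ 2 |t - s|` and `|f t - f s| ≤ 2B`.
For `φ = phiNS` one has `x φ'(x) = φ(x) (ρ - σ x^σ / (x^σ + c₁))`, so `x |φ'(x)| ≤ σ |φ(x)|`,
and `φ` is bounded because `τ^ρ ≤ 1` for `τ ≤ 1` and `τ^ρ ≤ τ^σ` for `τ ≥ 1`.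
-/

open Set Real

/-- The viscosity coefficient `φ(τ) = c₀ τ^ρ (τ^σ + c₁)⁻¹` proposed as an example in the
modified Navier–Stokes problem. -/
noncomputable def phiNS (c₀ c₁ ρ σ : ℝ) (τ : ℝ) : ℝ :=
  c₀ * τ ^ ρ / (τ ^ σ + c₁)

section StructuralCondition

variable {f : ℝ → ℝ} {B K : ℝ}

lemma abs_sub_mul_le_of_half_le (hf : ∀ x, 0 < x → DifferentiableAt ℝ f x)
    (hK : ∀ x, 0 < x → x * |deriv f x| ≤ K) {t s : ℝ} (ht : 0 < t) (hs : t / 2 ≤ s) :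
    |f t - f s| * t ≤ 2 * K * |t - s| := by
  have hderiv : ∀ x ∈ Ici (t / 2), ‖deriv f x‖ ≤ 2 * K / t := fun x hx => by
    rw [norm_eq_abs, le_div_iff₀ ht]
    have hx : t / 2 ≤ x := hx
    nlinarith [hK x (by linarith), abs_nonneg (deriv f x)]
  have hmvt := (convex_Ici (t / 2)).norm_image_sub_le_of_norm_deriv_le
    (fun x hx => hf x (lt_of_lt_of_le (half_pos ht) hx)) hderiv hs (half_le_self ht.le)
  rw [norm_eq_abs, norm_eq_abs] at hmvt
  calc |f t - f s| * t ≤ 2 * K / t * |t - s| * t := by gcongr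
    _ = 2 * K * |t - s| := by field_simp

lemma abs_sub_mul_le_of_abs_le_of_mul_abs_deriv_le (hB : ∀ x, 0 ≤ x → |f x| ≤ B)
    (hf : ∀ x, 0 < x → DifferentiableAt ℝ f x) (hK : ∀ x, 0 < x → x * |deriv f x| ≤ K)
    {t s : ℝ} (ht : 0 ≤ t) (hs : 0 ≤ s) :
    |f t - f s| * t ≤ (2 * K + 4 * B) * |t - s| := by
  have hK0 : 0 ≤ K := (mul_nonneg zero_le_one (abs_nonneg _)).trans (hK 1 one_pos)
  have hB0 : 0 ≤ B := (abs_nonneg _).trans (hB 0 le_rfl)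
  rcases le_or_gt t (2 * |t - s|) with hfar | hnear
  · have hdiff : |f t - f s| ≤ 2 * B := by
      linarith [abs_sub (f t) (f s), hB t ht, hB s hs]
    nlinarith [abs_nonneg (f t - f s), abs_nonneg (t - s)]
  · have ht0 : 0 < t := lt_of_le_of_lt (by positivity) hnear
    have hst : t / 2 ≤ s := by linarith [le_abs_self (t - s)]
    nlinarith [abs_sub_mul_le_of_half_le hf hK ht0 hst, abs_nonneg (t - s)]

/-- The extra `B` in `μ` absorbs a possibly negative value `f t`. -/
lemma exists_abs_sub_mul_le_add_mul_abs_sub (hB : ∀ x, 0 ≤ x → |f x| ≤ B)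
    (hf : ∀ x, 0 < x → DifferentiableAt ℝ f x) (hK : ∀ x, 0 < x → x * |deriv f x| ≤ K) :
    ∃ μ ≥ (0 : ℝ), ∀ t ∈ Ici (0 : ℝ), ∀ s ∈ Ici (0 : ℝ),
      |f t - f s| * t ≤ (μ + f t) * |t - s| := by
  have hK0 : 0 ≤ K := (mul_nonneg zero_le_one (abs_nonneg _)).trans (hK 1 one_pos)
  have hB0 : 0 ≤ B := (abs_nonneg _).trans (hB 0 le_rfl)
  refine ⟨2 * K + 5 * B, by positivity, fun t ht s hs => ?_⟩
  have hft : -B ≤ f t := neg_le_of_abs_le (hB t ht)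
  calc |f t - f s| * t ≤ (2 * K + 4 * B) * |t - s| :=
        abs_sub_mul_le_of_abs_le_of_mul_abs_deriv_le hB hf hK ht hs
    _ ≤ (2 * K + 5 * B + f t) * |t - s| :=
        mul_le_mul_of_nonneg_right (by linarith) (abs_nonneg _)

end StructuralCondition

section phiNS

variable {c₀ c₁ ρ σ τ : ℝ}

lemma rpow_div_rpow_add_le_max (hρ : 0 ≤ ρ) (hρσ : ρ ≤ σ) (hc₁ : 0 < c₁) (hτ : 0 ≤ τ) :
    τ ^ ρ / (τ ^ σ + c₁) ≤ max c₁⁻¹ 1 := by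
  have hσ : 0 ≤ τ ^ σ := rpow_nonneg hτ σ
  rw [div_le_iff₀ (by positivity)]
  rcases le_total τ 1 with hτ1 | hτ1
  · calc τ ^ ρ ≤ 1 := rpow_le_one hτ hτ1 hρ
      _ = c₁⁻¹ * c₁ := (inv_mul_cancel₀ hc₁.ne').symm
      _ ≤ max c₁⁻¹ 1 * (τ ^ σ + c₁) :=
        mul_le_mul (le_max_left _ _) (by linarith) hc₁.le (by positivity)
  · calc τ ^ ρ ≤ τ ^ σ := rpow_le_rpow_of_exponent_le hτ1 hρσ
      _ ≤ 1 * (τ ^ σ + c₁) := by linarith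
      _ ≤ max c₁⁻¹ 1 * (τ ^ σ + c₁) := by gcongr; exact le_max_right _ _

lemma abs_phiNS_le (hρ : 0 ≤ ρ) (hρσ : ρ ≤ σ) (hc₁ : 0 < c₁) (hτ : 0 ≤ τ) :
    |phiNS c₀ c₁ ρ σ τ| ≤ |c₀| * max c₁⁻¹ 1 := by
  rw [phiNS, mul_div_assoc, abs_mul, abs_of_nonneg (by positivity : 0 ≤ τ ^ ρ / (τ ^ σ + c₁))]
  gcongr
  exact rpow_div_rpow_add_le_max hρ hρσ hc₁ hτ

lemma continuousOn_phiNS (hρ : 0 ≤ ρ) (hσ : 0 ≤ σ) (hc₁ : 0 < c₁) :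
    ContinuousOn (phiNS c₀ c₁ ρ σ) (Ici 0) :=
  ((continuous_const.mul (continuous_rpow_const hρ)).continuousOn).div
    ((continuous_rpow_const hσ).add continuous_const).continuousOn
    fun _ hx => (add_pos_of_nonneg_of_pos (rpow_nonneg hx σ) hc₁).ne'

lemma hasDerivAt_phiNS (hc₁ : 0 ≤ c₁) (hτ : 0 < τ) :
    HasDerivAt (phiNS c₀ c₁ ρ σ)
      (phiNS c₀ c₁ ρ σ τ * (ρ - σ * (τ ^ σ / (τ ^ σ + c₁))) / τ) τ := by
  have hden : 0 < τ ^ σ + c₁ := by positivity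
  have hnum := ((hasDerivAt_rpow_const (p := ρ) (Or.inl hτ.ne')).const_mul c₀)
  have hden' := (hasDerivAt_rpow_const (p := σ) (Or.inl hτ.ne')).add_const c₁
  refine (hnum.div hden' hden.ne').congr_deriv ?_
  rw [phiNS, rpow_sub_one hτ.ne', rpow_sub_one hτ.ne']
  field_simp

lemma mul_abs_deriv_phiNS_le (hρ : 0 ≤ ρ) (hρσ : ρ ≤ σ) (hc₁ : 0 ≤ c₁) (hτ : 0 < τ) :
    τ * |deriv (phiNS c₀ c₁ ρ σ) τ| ≤ σ * |phiNS c₀ c₁ ρ σ τ| := by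
  have hden : 0 < τ ^ σ + c₁ := by positivity
  have hratio : τ ^ σ / (τ ^ σ + c₁) ∈ Icc (0 : ℝ) 1 :=
    ⟨by positivity, (div_le_one hden).2 (by linarith)⟩
  have hfactor : |ρ - σ * (τ ^ σ / (τ ^ σ + c₁))| ≤ σ := by
    rw [abs_le]; constructor <;> nlinarith [hratio.1, hratio.2]
  rw [(hasDerivAt_phiNS hc₁ hτ).deriv, abs_div, abs_mul, abs_of_pos hτ,
    mul_div_cancel₀ _ hτ.ne']
  exact (mul_le_mul_of_nonneg_left hfactor (abs_nonneg _)).trans_eq (mul_comm _ _)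

end phiNS

theorem phiNS_continuous_bounded_and_structural_condition_general
    (ρ σ c₀ c₁ : ℝ) (hρ : 1 ≤ ρ) (hρσ : ρ ≤ σ) (hc₁ : 0 < c₁) :
    ContinuousOn (phiNS c₀ c₁ ρ σ) (Ici 0) ∧
    (∃ C : ℝ, ∀ τ ∈ Ici (0 : ℝ), |phiNS c₀ c₁ ρ σ τ| ≤ C) ∧
    ∃ μ ≥ (0 : ℝ), ∀ t ∈ Ici (0 : ℝ), ∀ s ∈ Ici (0 : ℝ),
      |phiNS c₀ c₁ ρ σ t - phiNS c₀ c₁ ρ σ s| * t ≤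
        (μ + phiNS c₀ c₁ ρ σ t) * |t - s| := by
  have hρ0 : 0 ≤ ρ := zero_le_one.trans hρ
  have hσ0 : 0 ≤ σ := hρ0.trans hρσ
  have hbound : ∀ τ, 0 ≤ τ → |phiNS c₀ c₁ ρ σ τ| ≤ |c₀| * max c₁⁻¹ 1 :=
    fun τ hτ => abs_phiNS_le hρ0 hρσ hc₁ hτ
  refine ⟨continuousOn_phiNS hρ0 hσ0 hc₁, ⟨_, hbound⟩, ?_⟩
  refine exists_abs_sub_mul_le_add_mul_abs_sub (K := σ * (|c₀| * max c₁⁻¹ 1)) hbound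
    (fun x hx => (hasDerivAt_phiNS hc₁.le hx).differentiableAt) (fun x hx => ?_)
  calc x * |deriv (phiNS c₀ c₁ ρ σ) x| ≤ σ * |phiNS c₀ c₁ ρ σ x| :=
        mul_abs_deriv_phiNS_le hρ0 hρσ hc₁.le hx
    _ ≤ σ * (|c₀| * max c₁⁻¹ 1) := mul_le_mul_of_nonneg_left (hbound x hx.le) hσ0

/-- The function `φ(τ) = c₀ τ^ρ (τ^σ + c₁)⁻¹` with `σ ≥ ρ ≥ 1`, `c₀ ≥ 0`, `c₁ > 0` is
continuous and bounded on `[0, ∞)` and satisfies the structural condition 11 of the modified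
Navier–Stokes problem: there is `μ ≥ 0` with
`|φ(t) − φ(s)|·t ≤ (μ + φ(t))·|t − s|` for all `t, s ≥ 0`. -/
theorem phiNS_continuous_bounded_and_structural_condition
    (ρ σ c₀ c₁ : ℝ) (hρ : 1 ≤ ρ) (hσ : 1 ≤ σ) (hρσ : ρ ≤ σ)
    (hc₀ : 0 ≤ c₀) (hc₁ : 0 < c₁) :
    ContinuousOn (phiNS c₀ c₁ ρ σ) (Ici 0) ∧
    (∃ C : ℝ, ∀ τ ∈ Ici (0 : ℝ), |phiNS c₀ c₁ ρ σ τ| ≤ C) ∧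
    ∃ μ ≥ (0 : ℝ), ∀ t ∈ Ici (0 : ℝ), ∀ s ∈ Ici (0 : ℝ),
      |phiNS c₀ c₁ ρ σ t - phiNS c₀ c₁ ρ σ s| * t ≤
        (μ + phiNS c₀ c₁ ρ σ t) * |t - s| :=
  phiNS_continuous_bounded_and_structural_condition_general ρ σ c₀ c₁ hρ hρσ hc₁
end
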